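/- Let λ₁, λ₂ ∈ ℝ and let C > 0 be a constant such that −P(g) ≤ C · H(g)^{3/2} · M(g)^{1/2} for every Schwartz function g : ℝ³ → ℂ. Then every nonzero Schwartz function f : ℝ³ → ℂ with P(f) ≤ 0 satisfies ( Im ∫_{ℝ³} (x · ∇f(x)) · conj(f(x)) dx )² ≤ ( ∫_{ℝ³} |x|² |f(x)|² dx ) · ( H(f) − (−P(f))^{2/3} / ( C^{2/3} · M(f)^{1/3} ) ). -/

import Mathlib

open MeasureTheory FourierTransform SchwartzMap

noncomputable section

-- The dipolar symbol `m(ξ) = (4π/3)(2ξ₃² − ξ₂² − ξ₁²)/|ξ|²`, with `m(0) := 0`.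
open Classical in
def dipm (ξ : EuclideanSpace ℝ (Fin 3)) : ℝ :=
  if ξ = 0 then 0
  else (4 * Real.pi / 3) * (2 * (ξ 2) ^ 2 - (ξ 1) ^ 2 - (ξ 0) ^ 2) / ‖ξ‖ ^ 2

-- The mass `M(f) = ∫ |f|²`.
def massF (f : SchwartzMap (EuclideanSpace ℝ (Fin 3)) ℂ) : ℝ :=
  ∫ x, ‖f x‖ ^ 2

-- The kinetic energy `H(f) = ∫ |∇f|² = ∫ Σ_j |∂_j f|²`.
def kinF (f : SchwartzMap (EuclideanSpace ℝ (Fin 3)) ℂ) : ℝ :=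
  ∫ x, ∑ j : Fin 3, ‖fderiv ℝ (⇑f) x (EuclideanSpace.single j (1 : ℝ))‖ ^ 2

-- The potential energy `P(f) = λ₁∫|f|⁴ + λ₂∫ m(ξ)|𝓕(|f|²)(ξ)|² dξ`.
def potF (l₁ l₂ : ℝ) (f : SchwartzMap (EuclideanSpace ℝ (Fin 3)) ℂ) : ℝ :=
  l₁ * ∫ x, ‖f x‖ ^ 4 +
    l₂ * ∫ ξ, dipm ξ * ‖𝓕 (fun x => ((‖f x‖ ^ 2 : ℝ) : ℂ)) ξ‖ ^ 2

/-! Multiplying `f` by the chirp `exp (i a |x|²)` leaves `|f|`, hence the mass and the potential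
energy, unchanged, while the kinetic energy becomes the quadratic polynomial
`H(f) + 4a Im ∫ (x·∇f) f̄ + 4a² ∫ |x|²|f|²` in `a`. The Gagliardo–Nirenberg bound applied to every
modulated function keeps this polynomial above `(−P)^{2/3} / (C^{2/3} M^{1/3})`, so its
discriminant is nonpositive, which is the inequality. -/

open Complex ComplexConjugate

lemma iteratedDeriv_cexp_ofReal_mul_I (n : ℕ) :
    iteratedDeriv n (fun t : ℝ ↦ cexp (t * I)) = fun t : ℝ ↦ I ^ n * cexp (t * I) := by
  induction n with
  | zero => simp
  | succ n ih =>
    ext t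
    rw [iteratedDeriv_succ, ih]
    have : HasDerivAt (fun t : ℝ ↦ cexp (t * I)) (cexp (t * I) * I) t :=
      ((hasDerivAt_id (t : ℂ)).mul_const I).cexp.comp_ofReal.congr_deriv (by simp)
    rw [(this.const_mul (I ^ n)).deriv, pow_succ]
    ring

lemma hasTemperateGrowth_cexp_ofReal_mul_I : (fun t : ℝ ↦ cexp (t * I)).HasTemperateGrowth := by
  refine ⟨contDiff_exp.comp (ofRealCLM.contDiff.mul contDiff_const), fun n ↦ ⟨0, 1, fun t ↦ ?_⟩⟩
  rw [norm_iteratedFDeriv_eq_norm_iteratedDeriv, iteratedDeriv_cexp_ofReal_mul_I]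
  simp [norm_exp_ofReal_mul_I]

lemma norm_add_ofReal_mul_I_mul_sq (u w : ℂ) (r : ℝ) :
    ‖u + r * I * w‖ ^ 2 = ‖u‖ ^ 2 + r ^ 2 * ‖w‖ ^ 2 + 2 * r * (u * conj w).im := by
  simp only [Complex.sq_norm, normSq_apply, add_re, add_im, mul_re, mul_im, ofReal_re, ofReal_im,
    I_re, I_im, conj_re, conj_im]
  ring

section Modulation

variable {E : Type*} [NormedAddCommGroup E] [InnerProductSpace ℝ E]

def chirp (a : ℝ) (x : E) : ℂ := cexp ((a * ‖x‖ ^ 2 : ℝ) * I)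

lemma hasTemperateGrowth_chirp (a : ℝ) : (chirp (E := E) a).HasTemperateGrowth :=
  hasTemperateGrowth_cexp_ofReal_mul_I.comp
    ((Function.HasTemperateGrowth.const a).mul (Function.hasTemperateGrowth_norm_sq E))

def modulate (a : ℝ) : 𝓢(E, ℂ) →L[ℂ] 𝓢(E, ℂ) := smulLeftCLM ℂ (chirp a)

lemma modulate_apply (a : ℝ) (f : 𝓢(E, ℂ)) (x : E) : modulate a f x = chirp a x * f x := by
  simp [modulate, hasTemperateGrowth_chirp]

lemma norm_modulate_apply (a : ℝ) (f : 𝓢(E, ℂ)) (x : E) : ‖modulate a f x‖ = ‖f x‖ := by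
  rw [modulate_apply, norm_mul, chirp, norm_exp_ofReal_mul_I, one_mul]

lemma fderiv_modulate_apply (a : ℝ) (f : 𝓢(E, ℂ)) (x v : E) :
    fderiv ℝ (modulate a f) x v =
      chirp a x * (fderiv ℝ f x v + (2 * a * inner ℝ x v : ℝ) * I * f x) := by
  have hφ : HasFDerivAt (chirp a) _ x :=
    ((ofRealCLM.hasFDerivAt.comp x ((hasFDerivAt_id x).norm_sq.const_mul a)).mul_const I).cexp
  have h : HasFDerivAt (fun y ↦ chirp a y * f y) _ x := hφ.mul (f.hasFDerivAt x)
  rw [show ⇑(modulate a f) = fun y ↦ chirp a y * f y from funext (modulate_apply a f),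
    h.fderiv]
  simp only [chirp, ofReal_mul, ofReal_pow, id_eq, Function.comp_apply, ofRealCLM_apply,
    ContinuousLinearMap.comp_id, ContinuousLinearMap.comp_smulₛₗ, Real.ringHom_apply,
    ContinuousLinearMap.comp_smul, add_apply, smul_apply, smul_eq_mul,
    ContinuousLinearMap.comp_apply, coe_innerSL_apply, nsmul_eq_mul, Nat.cast_ofNat, real_smul,
    ofReal_ofNat]
  ring

lemma norm_sq_fderiv_modulate_apply (a : ℝ) (f : 𝓢(E, ℂ)) (x v : E) :
    ‖fderiv ℝ (modulate a f) x v‖ ^ 2 = ‖fderiv ℝ f x v‖ ^ 2 + (2 * a * inner ℝ x v) ^ 2 * ‖f x‖ ^ 2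
      + 2 * (2 * a * inner ℝ x v) * (fderiv ℝ f x v * conj (f x)).im := by
  rw [fderiv_modulate_apply, norm_mul, chirp, norm_exp_ofReal_mul_I, one_mul,
    norm_add_ofReal_mul_I_mul_sq]

lemma sum_norm_sq_fderiv_modulate_apply {ι : Type*} [Fintype ι] (b : OrthonormalBasis ι ℝ E)
    (a : ℝ) (f : 𝓢(E, ℂ)) (x : E) :
    ∑ i, ‖fderiv ℝ (modulate a f) x (b i)‖ ^ 2 = ∑ i, ‖fderiv ℝ f x (b i)‖ ^ 2
      + 4 * a ^ 2 * (‖x‖ ^ 2 * ‖f x‖ ^ 2) + 4 * a * (fderiv ℝ f x x * conj (f x)).im := by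
  have hnorm : ∑ i, inner ℝ x (b i) ^ 2 = ‖x‖ ^ 2 := by
    simp_rw [sq, ← real_inner_self_eq_norm_mul_norm, ← b.sum_inner_mul_inner x x,
      real_inner_comm x]
  have hradial : ∑ i, inner ℝ x (b i) * (fderiv ℝ f x (b i) * conj (f x)).im =
      (fderiv ℝ f x x * conj (f x)).im := by
    calc _ = (fderiv ℝ f x (∑ i, inner ℝ (b i) x • b i) * conj (f x)).im := by
          simp only [map_sum, map_smul, Finset.sum_mul, smul_mul_assoc, im_sum, smul_im,
            real_inner_comm x, smul_eq_mul]
      _ = _ := by rw [b.sum_repr']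
  simp_rw [norm_sq_fderiv_modulate_apply, Finset.sum_add_distrib]
  rw [← hnorm, ← hradial, Finset.mul_sum, Finset.sum_mul, Finset.mul_sum]
  congr 1
  · congr 1
    exact Finset.sum_congr rfl fun i _ ↦ by ring
  · exact Finset.sum_congr rfl fun i _ ↦ by ring

end Modulation

section Integrability

variable {D V W : Type*} [NormedAddCommGroup D] [NormedSpace ℝ D] [MeasurableSpace D]
  [BorelSpace D] [SecondCountableTopology D] {μ : Measure D} [μ.HasTemperateGrowth]
  [NormedAddCommGroup V] [NormedSpace ℝ V] [NormedAddCommGroup W] [NormedSpace ℝ W]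

lemma SchwartzMap.integrable_pow_mul_norm_mul_norm (φ : 𝓢(D, V)) (ψ : 𝓢(D, W)) (k : ℕ) :
    Integrable (fun x ↦ ‖x‖ ^ k * ‖φ x‖ * ‖ψ x‖) μ :=
  (φ.integrable_pow_mul μ k).mul_bdd ψ.continuous.norm.aestronglyMeasurable
    (ae_of_all _ fun x ↦ by simpa using ψ.norm_le_seminorm ℝ x)

open LineDeriv in
lemma SchwartzMap.integrable_norm_fderiv_apply_sq (f : 𝓢(D, ℂ)) (v : D) :
    Integrable (fun x ↦ ‖fderiv ℝ f x v‖ ^ 2) μ := by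
  have h := (∂_{v} f).integrable_pow_mul_norm_mul_norm (∂_{v} f) 0 (μ := μ)
  simp only [pow_zero, one_mul, lineDerivOp_apply_eq_fderiv] at h
  simpa only [sq, norm_mul] using h

lemma SchwartzMap.integrable_fderiv_apply_self_mul_conj (f : 𝓢(D, ℂ)) :
    Integrable (fun x ↦ fderiv ℝ f x x * conj (f x)) μ := by
  refine ((fderivCLM ℝ D ℂ f).integrable_pow_mul_norm_mul_norm f 1).mono'
    (((fderivCLM ℝ D ℂ f).continuous.clm_apply continuous_id).mul
      (continuous_conj.comp f.continuous)).aestronglyMeasurable (ae_of_all _ fun x ↦ ?_)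
  rw [norm_mul, RCLike.norm_conj, pow_one, fderivCLM_apply, mul_comm ‖x‖]
  gcongr
  exact (fderiv ℝ f x).le_opNorm x

end Integrability

lemma rpow_two_thirds_div_le_of_le {p C k m : ℝ} (hp : 0 ≤ p) (hC : 0 ≤ C) (hk : 0 ≤ k)
    (hm : 0 ≤ m) (h : p ≤ C * k ^ (3 / 2 : ℝ) * m ^ (1 / 2 : ℝ)) :
    p ^ (2 / 3 : ℝ) / (C ^ (2 / 3 : ℝ) * m ^ (1 / 3 : ℝ)) ≤ k := by
  refine div_le_of_le_mul₀ (by positivity) hk ?_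
  calc p ^ (2 / 3 : ℝ) ≤ (C * k ^ (3 / 2 : ℝ) * m ^ (1 / 2 : ℝ)) ^ (2 / 3 : ℝ) :=
        Real.rpow_le_rpow hp h (by norm_num)
    _ = k * (C ^ (2 / 3 : ℝ) * m ^ (1 / 3 : ℝ)) := by
        rw [Real.mul_rpow (by positivity) (by positivity), Real.mul_rpow hC (by positivity),
          ← Real.rpow_mul hk, ← Real.rpow_mul hm]
        norm_num
        ring

local notation "ℝ³" => EuclideanSpace ℝ (Fin 3)

lemma sum_coord_mul_apply_single {ι : Type*} [Fintype ι] [DecidableEq ι]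
    (L : EuclideanSpace ℝ ι →L[ℝ] ℂ) (x : EuclideanSpace ℝ ι) :
    ∑ j, (x j : ℂ) * L (EuclideanSpace.single j 1) = L x := by
  conv_rhs => rw [← (EuclideanSpace.basisFun ι ℝ).sum_repr x]
  simp [real_smul]

lemma kinF_nonneg (f : 𝓢(ℝ³, ℂ)) : 0 ≤ kinF f :=
  integral_nonneg fun _ ↦ by positivity

lemma massF_modulate (a : ℝ) (f : 𝓢(ℝ³, ℂ)) : massF (modulate a f) = massF f := by
  simp only [massF, norm_modulate_apply]

lemma potF_modulate (l₁ l₂ a : ℝ) (f : 𝓢(ℝ³, ℂ)) :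
    potF l₁ l₂ (modulate a f) = potF l₁ l₂ f := by
  simp only [potF, norm_modulate_apply]

lemma kinF_modulate (a : ℝ) (f : 𝓢(ℝ³, ℂ)) :
    kinF (modulate a f) = kinF f + 4 * a ^ 2 * (∫ x, ‖x‖ ^ 2 * ‖f x‖ ^ 2)
      + 4 * a * (∫ x, fderiv ℝ f x x * conj (f x)).im := by
  have hK : Integrable fun x : ℝ³ ↦ ∑ j : Fin 3, ‖fderiv ℝ f x (EuclideanSpace.single j 1)‖ ^ 2 :=
    integrable_finsetSum _ fun j _ ↦ f.integrable_norm_fderiv_apply_sq _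
  have hV : Integrable fun x : ℝ³ ↦ ‖x‖ ^ 2 * ‖f x‖ ^ 2 := by
    simpa [sq, mul_assoc] using f.integrable_pow_mul_norm_mul_norm f 2 (μ := volume)
  have hR := f.integrable_fderiv_apply_self_mul_conj (μ := volume)
  have him : ∫ x, (fderiv ℝ f x x * conj (f x)).im = (∫ x, fderiv ℝ f x x * conj (f x)).im :=
    integral_im hR
  have hdensity (x : ℝ³) :=
    sum_norm_sq_fderiv_modulate_apply (EuclideanSpace.basisFun (Fin 3) ℝ) a f x
  simp only [EuclideanSpace.basisFun_apply] at hdensity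
  rw [kinF, integral_congr_ae (ae_of_all _ hdensity), integral_add,
    integral_add hK (hV.const_mul _), integral_const_mul, integral_const_mul, ← kinF, him]
  exacts [hK.add (hV.const_mul _), hR.im.const_mul _]

theorem gao_wang_inequality_general (l₁ l₂ : ℝ) (C : ℝ) (hC : 0 < C)
    (hGN : ∀ g : SchwartzMap (EuclideanSpace ℝ (Fin 3)) ℂ,
      -potF l₁ l₂ g ≤ C * kinF g ^ ((3 : ℝ) / 2) * massF g ^ ((1 : ℝ) / 2))
    (f : SchwartzMap (EuclideanSpace ℝ (Fin 3)) ℂ)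
    (hP : potF l₁ l₂ f ≤ 0) :
    ((∫ x, (∑ j : Fin 3,
        (x j : ℂ) * fderiv ℝ (⇑f) x (EuclideanSpace.single j (1 : ℝ))) *
          (starRingEnd ℂ) (f x)).im) ^ 2 ≤
      (∫ x, ‖x‖ ^ 2 * ‖f x‖ ^ 2) *
        (kinF f -
          (-potF l₁ l₂ f) ^ ((2 : ℝ) / 3) /
            (C ^ ((2 : ℝ) / 3) * massF f ^ ((1 : ℝ) / 3))) := by
  simp_rw [sum_coord_mul_apply_single]
  set B := (-potF l₁ l₂ f) ^ ((2 : ℝ) / 3) / (C ^ ((2 : ℝ) / 3) * massF f ^ ((1 : ℝ) / 3))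
  have hB (a : ℝ) : B ≤ kinF (modulate a f) := by
    have h := hGN (modulate a f)
    rw [massF_modulate, potF_modulate] at h
    exact rpow_two_thirds_div_le_of_le (by linarith) hC.le (kinF_nonneg _)
      (integral_nonneg fun _ ↦ by positivity) h
  have hquadratic (a : ℝ) : 0 ≤ 4 * (∫ x, ‖x‖ ^ 2 * ‖f x‖ ^ 2) * (a * a)
      + 4 * (∫ x, fderiv ℝ f x x * conj (f x)).im * a + (kinF f - B) := by
    have := hB a
    rw [kinF_modulate] at this
    linarith
  have := discrim_le_zero hquadratic
  rw [discrim] at this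
  linarith

/-- The Gao–Wang virial-type inequality:
`(Im ∫ (x·∇f) conj f)² ≤ (∫ |x|²|f|²)·(H(f) − (−P(f))^{2/3}/(C^{2/3} M(f)^{1/3}))`
for nonzero Schwartz `f` with `P(f) ≤ 0`, where `C` is a Gagliardo–Nirenberg
constant. -/
theorem gao_wang_inequality (l₁ l₂ : ℝ) (C : ℝ) (hC : 0 < C)
    (hGN : ∀ g : SchwartzMap (EuclideanSpace ℝ (Fin 3)) ℂ,
      -potF l₁ l₂ g ≤ C * kinF g ^ ((3 : ℝ) / 2) * massF g ^ ((1 : ℝ) / 2))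
    (f : SchwartzMap (EuclideanSpace ℝ (Fin 3)) ℂ) (hf : f ≠ 0)
    (hP : potF l₁ l₂ f ≤ 0) :
    ((∫ x, (∑ j : Fin 3,
        (x j : ℂ) * fderiv ℝ (⇑f) x (EuclideanSpace.single j (1 : ℝ))) *
          (starRingEnd ℂ) (f x)).im) ^ 2 ≤
      (∫ x, ‖x‖ ^ 2 * ‖f x‖ ^ 2) *
        (kinF f -
          (-potF l₁ l₂ f) ^ ((2 : ℝ) / 3) /
            (C ^ ((2 : ℝ) / 3) * massF f ^ ((1 : ℝ) / 3))) :=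
  gao_wang_inequality_general l₁ l₂ C hC hGN f hP
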